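/- Let A be a closed densely defined operator from H1 to H2 and B = A† its Moore–Penrose inverse. Then (I + A*A)^{-1} + (I + BB*)^{-1} = I + P_{N(B*)}, where P_{N(B*)} is the orthogonal projection onto the null space of B*. -/

import Mathlib

/-!
Fix `x`, put `u = (I + A*A)⁻¹ x`, `t = A*Au` and `w = BAu`, so that `x = u + t`. The
Moore–Penrose identities give `u - w ∈ N(A) ⊆ N(B*)`, `B* t = Au`, and
`N(B*)ᗮ = closure (range B) = N(A)ᗮ ∋ t, w`. Hence `x = (t + w) + (u - w)` is the orthogonal
splitting of `x` along `N(B*)ᗮ ⊕ N(B*)`, so `P x = u - w`, while `t + (u - w)` solves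
`(I + BB*) z = x`, so it is `(I + BB*)⁻¹ x`. Adding up gives `R1 x + R2 x = x + P x`.
-/

open scoped InnerProductSpace

variable {H1 H2 : Type*}
  [NormedAddCommGroup H1] [InnerProductSpace ℂ H1] [CompleteSpace H1]
  [NormedAddCommGroup H2] [InnerProductSpace ℂ H2] [CompleteSpace H2]

/-- `B` is the Moore–Penrose inverse of the closed densely defined operator `A : H1 →ₗ. H2`. -/
def IsMPInverseP (A : H1 →ₗ.[ℂ] H2) (B : H2 →ₗ.[ℂ] H1) : Prop :=
  B.IsClosed ∧
    B.domain = LinearMap.range A.toFun ⊔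
      (LinearMap.ker A.adjoint.toFun).map A.adjoint.domain.subtype ∧
    (LinearMap.ker B.toFun).map B.domain.subtype =
      (LinearMap.ker A.adjoint.toFun).map A.adjoint.domain.subtype ∧
    (∀ x : A.domain, ∃ h : A x ∈ B.domain, ∃ h2 : B ⟨A x, h⟩ ∈ A.domain,
      A ⟨B ⟨A x, h⟩, h2⟩ = A x) ∧
    (∀ y : B.domain, ∃ h2 : B y ∈ A.domain, ∃ h : A ⟨B y, h2⟩ ∈ B.domain,
      B ⟨A ⟨B y, h2⟩, h⟩ = B y) ∧
    (∀ (y : B.domain) (h2 : B y ∈ A.domain),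
      A ⟨B y, h2⟩ ∈ (LinearMap.range A.toFun).topologicalClosure ∧
      ∀ z ∈ (LinearMap.range A.toFun).topologicalClosure, ⟪(y : H2) - A ⟨B y, h2⟩, z⟫_ℂ = 0) ∧
    (∀ (x : A.domain) (h : A x ∈ B.domain),
      B ⟨A x, h⟩ ∈ (LinearMap.range B.toFun).topologicalClosure ∧
      ∀ z ∈ (LinearMap.range B.toFun).topologicalClosure, ⟪(x : H1) - B ⟨A x, h⟩, z⟫_ℂ = 0)

open scoped LinearPMap

namespace LinearPMap

section Ker

variable {R M N : Type*} [Ring R] [AddCommGroup M] [Module R M] [AddCommGroup N] [Module R N]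

def ker (T : M →ₗ.[R] N) : Submodule R M :=
  (LinearMap.ker T.toFun).map T.domain.subtype

theorem mem_ker {T : M →ₗ.[R] N} {x : M} : x ∈ T.ker ↔ ∃ h : x ∈ T.domain, T ⟨x, h⟩ = 0 := by
  constructor
  · rintro ⟨y, hy, rfl⟩
    exact ⟨y.2, hy⟩
  · rintro ⟨h, hx⟩
    exact ⟨⟨x, h⟩, hx, rfl⟩

end Ker

variable {𝕜 E F : Type*} [RCLike 𝕜] [NormedAddCommGroup E] [InnerProductSpace 𝕜 E]
  [NormedAddCommGroup F] [InnerProductSpace 𝕜 F] [CompleteSpace E]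
  {T : E →ₗ.[𝕜] F}

theorem ker_adjoint (hT : Dense (T.domain : Set E)) : T†.ker = (LinearMap.range T.toFun)ᗮ := by
  ext y
  rw [mem_ker, Submodule.mem_orthogonal']
  constructor
  · rintro ⟨hy, hy0⟩ - ⟨x, rfl⟩
    have := adjoint_isFormalAdjoint hT ⟨y, hy⟩ x
    rw [hy0, inner_zero_left] at this
    exact this.symm
  · intro hy
    have key : ∀ x : T.domain, ⟪(0 : E), x⟫_𝕜 = ⟪y, T x⟫_𝕜 := fun x => by
      rw [inner_zero_left]
      exact (hy _ (LinearMap.mem_range_self _ x)).symm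
    exact ⟨mem_adjoint_domain_of_exists y ⟨0, key⟩, adjoint_apply_eq hT _ key⟩

theorem adjoint_apply_mem_orthogonal_ker (hT : Dense (T.domain : Set E)) (y : T†.domain) :
    T† y ∈ T.kerᗮ := by
  rw [Submodule.mem_orthogonal']
  intro n hn
  obtain ⟨hn, hn0⟩ := mem_ker.mp hn
  rw [adjoint_isFormalAdjoint hT y ⟨n, hn⟩, hn0, inner_zero_right]

theorem eq_of_add_apply_adjoint_eq (hT : Dense (T.domain : Set E)) {a b : T†.domain}
    {x y : T.domain} (hx : T† a = x) (hy : T† b = y) (h : (a : F) + T x = b + T y) : a = b := by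
  have hTxy : T (x - y) = b - a := by
    rw [map_sub]
    exact sub_eq_sub_iff_add_eq_add.mpr (by rw [add_comm, h, add_comm])
  have key : ⟪(x - y : E), x - y⟫_𝕜 = -⟪(a - b : F), a - b⟫_𝕜 := by
    have := adjoint_isFormalAdjoint hT (a - b) (x - y)
    rw [map_sub, hx, hy, hTxy] at this
    rw [← inner_neg_right, neg_sub]
    exact_mod_cast this
  have hab : RCLike.re ⟪(a - b : F), a - b⟫_𝕜 ≤ 0 := by
    have := inner_self_nonneg (𝕜 := 𝕜) (x := (x - y : E))
    rw [key] at this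
    simpa using this
  exact sub_eq_zero.mp (Subtype.ext (by exact_mod_cast re_inner_self_nonpos.mp hab))

end LinearPMap

theorem IsSelfAdjoint.apply_eq_zero_of_mem_orthogonal {𝕜 E : Type*} [RCLike 𝕜]
    [NormedAddCommGroup E] [InnerProductSpace 𝕜 E] [CompleteSpace E] {P : E →L[𝕜] E}
    (hP : IsSelfAdjoint P) (hPP : ∀ x, P (P x) = P x) {K : Submodule 𝕜 E} (hPK : ∀ x, P x ∈ K)
    {y : E} (hy : y ∈ Kᗮ) : P y = 0 := by
  rw [← inner_self_eq_zero (𝕜 := 𝕜)]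
  calc ⟪P y, P y⟫_𝕜 = ⟪y, P (P y)⟫_𝕜 := hP.isSymmetric y (P y)
    _ = ⟪y, P y⟫_𝕜 := by rw [hPP]
    _ = 0 := inner_eq_zero_symm.mp ((Submodule.mem_orthogonal K y).mp hy _ (hPK y))

namespace IsMPInverseP

open LinearPMap

variable {E F : Type*} [NormedAddCommGroup E] [InnerProductSpace ℂ E] [CompleteSpace E]
  [NormedAddCommGroup F] [InnerProductSpace ℂ F] {A : E →ₗ.[ℂ] F} {B : F →ₗ.[ℂ] E}

theorem apply_mem_domain (hB : IsMPInverseP A B) (x : A.domain) : A x ∈ B.domain := by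
  obtain ⟨-, hdom, -⟩ := hB
  rw [hdom]
  exact Submodule.mem_sup_left (LinearMap.mem_range_self _ x)

theorem dense_domain [CompleteSpace F] (hB : IsMPInverseP A B) (hAd : Dense (A.domain : Set E)) :
    Dense (B.domain : Set F) := by
  rw [Submodule.dense_iff_topologicalClosure_eq_top, Submodule.topologicalClosure_eq_top_iff,
    Submodule.eq_bot_iff]
  intro q hq
  have hqA : q ∈ A†.ker := by
    rw [ker_adjoint hAd, Submodule.mem_orthogonal']
    rintro - ⟨x, rfl⟩
    exact (Submodule.mem_orthogonal' _ _).mp hq _ (hB.apply_mem_domain x)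
  have hqB : q ∈ B.domain := by
    obtain ⟨-, hdom, -⟩ := hB
    rw [hdom]
    exact Submodule.mem_sup_right hqA
  exact inner_self_eq_zero.mp ((Submodule.mem_orthogonal' _ _).mp hq q hqB)

theorem ker_le_orthogonal_range (hB : IsMPInverseP A B) :
    A.ker ≤ (LinearMap.range B.toFun)ᗮ := by
  intro n hn
  obtain ⟨hn, hn0⟩ := mem_ker.mp hn
  have hAn := hB.apply_mem_domain ⟨n, hn⟩
  have hBAn : B ⟨A ⟨n, hn⟩, hAn⟩ = 0 := by
    rw [show (⟨A ⟨n, hn⟩, hAn⟩ : B.domain) = 0 from Subtype.ext hn0, B.map_zero]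
  obtain ⟨-, -, -, -, -, -, horth⟩ := hB
  rw [Submodule.mem_orthogonal']
  rintro - ⟨y, rfl⟩
  have := (horth ⟨n, hn⟩ hAn).2 (B y)
    (Submodule.le_topologicalClosure _ (LinearMap.mem_range_self _ y))
  rwa [hBAn, sub_zero] at this

theorem apply_mem_orthogonal_ker (hB : IsMPInverseP A B) (y : B.domain) : B y ∈ A.kerᗮ :=
  fun n hn => (Submodule.mem_orthogonal' _ n).mp (hB.ker_le_orthogonal_range hn) _
    (LinearMap.mem_range_self _ y)

theorem ker_le_ker_adjoint [CompleteSpace F] (hB : IsMPInverseP A B)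
    (hAd : Dense (A.domain : Set E)) : A.ker ≤ B†.ker := by
  rw [ker_adjoint (hB.dense_domain hAd)]
  exact hB.ker_le_orthogonal_range

theorem sub_apply_mem_ker (hB : IsMPInverseP A B) (x : A.domain) :
    (x : E) - B ⟨A x, hB.apply_mem_domain x⟩ ∈ A.ker := by
  obtain ⟨-, -, -, hABA, -⟩ := hB
  obtain ⟨_, hBAx, hABAx⟩ := hABA x
  refine mem_ker.mpr ⟨sub_mem x.2 hBAx, ?_⟩
  rw [show (⟨_, sub_mem x.2 hBAx⟩ : A.domain) = x - ⟨_, hBAx⟩ from rfl, A.map_sub, hABAx, sub_self]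

theorem domain_le_sup_ker (hB : IsMPInverseP A B) :
    A.domain ≤ (LinearMap.range B.toFun).topologicalClosure ⊔ A.ker := by
  intro x hx
  refine Submodule.mem_sup.mpr ⟨_, Submodule.le_topologicalClosure _
    (LinearMap.mem_range_self _ ⟨_, hB.apply_mem_domain ⟨x, hx⟩⟩), _,
    hB.sub_apply_mem_ker ⟨x, hx⟩, add_sub_cancel _ _⟩

theorem orthogonal_ker_eq (hB : IsMPInverseP A B) (hAd : Dense (A.domain : Set E)) :
    A.kerᗮ = (LinearMap.range B.toFun).topologicalClosure := by
  have hM : (LinearMap.range B.toFun).topologicalClosure ≤ A.kerᗮ := by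
    rw [← Submodule.orthogonal_orthogonal_eq_closure]
    exact Submodule.orthogonal_le hB.ker_le_orthogonal_range
  have hbot : (LinearMap.range B.toFun).topologicalClosureᗮ ⊓ A.kerᗮ = ⊥ := by
    rw [Submodule.inf_orthogonal, ← Submodule.topologicalClosure_eq_top_iff, eq_top_iff,
      ← Submodule.dense_iff_topologicalClosure_eq_top.mp hAd]
    exact Submodule.topologicalClosure_mono hB.domain_le_sup_ker
  have := Submodule.sup_orthogonal_inf_of_hasOrthogonalProjection hM
  rwa [hbot, sup_bot_eq, eq_comm] at this

theorem orthogonal_ker_adjoint_eq [CompleteSpace F] (hB : IsMPInverseP A B)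
    (hAd : Dense (A.domain : Set E)) : B†.kerᗮ = A.kerᗮ := by
  rw [ker_adjoint (hB.dense_domain hAd), Submodule.orthogonal_orthogonal_eq_closure,
    hB.orthogonal_ker_eq hAd]

theorem adjoint_apply_adjoint_apply [CompleteSpace F] (hB : IsMPInverseP A B)
    (hAd : Dense (A.domain : Set E))
    (v : A†.domain) (hv : (v : F) ∈ (LinearMap.range A.toFun).topologicalClosure) :
    ∃ h : A† v ∈ B†.domain, B† ⟨A† v, h⟩ = v := by
  have key : ∀ y : B.domain, ⟪(v : F), y⟫_ℂ = ⟪A† v, B y⟫_ℂ := by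
    obtain ⟨-, -, -, -, hBAB, horth, -⟩ := hB
    intro y
    obtain ⟨hyA, -⟩ := hBAB y
    have horth := (horth y hyA).2 v hv
    rw [inner_eq_zero_symm, inner_sub_right, sub_eq_zero] at horth
    rw [horth, adjoint_isFormalAdjoint hAd v ⟨B y, hyA⟩]
  exact ⟨mem_adjoint_domain_of_exists _ ⟨v, key⟩, adjoint_apply_eq (hB.dense_domain hAd) _ key⟩

end IsMPInverseP

theorem mp_resolvent_sum_general (A : H1 →ₗ.[ℂ] H2) (hAd : Dense (A.domain : Set H1))
    (B : H2 →ₗ.[ℂ] H1) (hB : IsMPInverseP A B)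
    (R1 : H1 →L[ℂ] H1)
    (hR1 : ∀ x : H1, ∃ hx : R1 x ∈ A.domain, ∃ hy : A ⟨R1 x, hx⟩ ∈ A.adjoint.domain,
      R1 x + A.adjoint ⟨A ⟨R1 x, hx⟩, hy⟩ = x)
    (R2 : H1 →L[ℂ] H1)
    (hR2 : ∀ x : H1, ∃ hx : R2 x ∈ B.adjoint.domain, ∃ hy : B.adjoint ⟨R2 x, hx⟩ ∈ B.domain,
      R2 x + B ⟨B.adjoint ⟨R2 x, hx⟩, hy⟩ = x)
    (P : H1 →L[ℂ] H1) (hPsa : IsSelfAdjoint P) (hPidem : ∀ x, P (P x) = P x)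
    (hPmem : ∀ x : H1, ∃ h : P x ∈ B.adjoint.domain, B.adjoint ⟨P x, h⟩ = 0)
    (hPfix : ∀ (y : H1) (h : y ∈ B.adjoint.domain), B.adjoint ⟨y, h⟩ = 0 → P y = y) :
    ∀ x : H1, R1 x + R2 x = x + P x := by
  intro x
  obtain ⟨hu, hAu, hx⟩ := hR1 x
  set u : A.domain := ⟨R1 x, hu⟩
  set t := A† ⟨A u, hAu⟩
  set w := B ⟨A u, hB.apply_mem_domain u⟩
  change (u : H1) + t = x at hx
  show (u : H1) + R2 x = x + P x
  obtain ⟨hnB, hnB0⟩ := LinearPMap.mem_ker.mp (hB.ker_le_ker_adjoint hAd (hB.sub_apply_mem_ker u))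
  obtain ⟨htB, htB0⟩ := hB.adjoint_apply_adjoint_apply hAd ⟨A u, hAu⟩
    (Submodule.le_topologicalClosure _ (LinearMap.mem_range_self _ u))
  have hPtw : P (t + w) = 0 := by
    refine hPsa.apply_eq_zero_of_mem_orthogonal hPidem
      (fun y => LinearPMap.mem_ker.mpr (hPmem y)) ?_
    rw [hB.orthogonal_ker_adjoint_eq hAd]
    exact add_mem (LinearPMap.adjoint_apply_mem_orthogonal_ker hAd _)
      (hB.apply_mem_orthogonal_ker _)
  have hPx : P x = u - w := by
    rw [← hx, show (u : H1) + t = (t + w) + (u - w) by abel, map_add, hPtw, hPfix _ hnB hnB0,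
      zero_add]
  obtain ⟨hv, hBv, hv_eq⟩ := hR2 x
  have hR2x : R2 x = t + (u - w) := congrArg Subtype.val <|
    LinearPMap.eq_of_add_apply_adjoint_eq (hB.dense_domain hAd) (a := ⟨R2 x, hv⟩)
      (b := ⟨t, htB⟩ + ⟨_, hnB⟩) (x := ⟨_, hBv⟩) (y := ⟨A u, hB.apply_mem_domain u⟩) rfl
      (by rw [LinearPMap.map_add, htB0, hnB0, add_zero])
      (by rw [hv_eq]; change x = t + (u - w) + w; rw [← hx]; abel)
  rw [hR2x, hPx, ← hx]
  abel

/-- For a closed densely defined `A` with Moore–Penrose inverse `B`,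
`(I + A*A)⁻¹ + (I + BB*)⁻¹ = I + P_{N(B*)}`, where `P` is the orthogonal projection onto
the null space of `B*`. -/
theorem mp_resolvent_sum (A : H1 →ₗ.[ℂ] H2) (hA : A.IsClosed) (hAd : Dense (A.domain : Set H1))
    (B : H2 →ₗ.[ℂ] H1) (hB : IsMPInverseP A B)
    (R1 : H1 →L[ℂ] H1)
    (hR1 : ∀ x : H1, ∃ hx : R1 x ∈ A.domain, ∃ hy : A ⟨R1 x, hx⟩ ∈ A.adjoint.domain,
      R1 x + A.adjoint ⟨A ⟨R1 x, hx⟩, hy⟩ = x)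
    (R2 : H1 →L[ℂ] H1)
    (hR2 : ∀ x : H1, ∃ hx : R2 x ∈ B.adjoint.domain, ∃ hy : B.adjoint ⟨R2 x, hx⟩ ∈ B.domain,
      R2 x + B ⟨B.adjoint ⟨R2 x, hx⟩, hy⟩ = x)
    (P : H1 →L[ℂ] H1) (hPsa : IsSelfAdjoint P) (hPidem : ∀ x, P (P x) = P x)
    (hPmem : ∀ x : H1, ∃ h : P x ∈ B.adjoint.domain, B.adjoint ⟨P x, h⟩ = 0)
    (hPfix : ∀ (y : H1) (h : y ∈ B.adjoint.domain), B.adjoint ⟨y, h⟩ = 0 → P y = y) :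
    ∀ x : H1, R1 x + R2 x = x + P x :=
  mp_resolvent_sum_general A hAd B hB R1 hR1 R2 hR2 P hPsa hPidem hPmem hPfix
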